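/- arXiv:2511.20491 — 4 statements merged into one kernel-verified Lean document; each statement's English description precedes it below -/
import Mathlib

section
/- For all τ in the open interval (0, 2π), we have 2(cos τ − 1) + τ sin τ < 0. -/
open Real

theorem stmt_0 :
    ∀ τ ∈ Set.Ioo (0 : ℝ) (2 * π),
      2 * (Real.cos τ - 1) + τ * Real.sin τ < 0 := by
  rintro τ ⟨hτ0, hτ2⟩
  set x := τ / 2 with hx
  have hx0 : 0 < x := by positivity
  have hxπ : x < π := by
    rw [hx]; linarith
  have hsin : 0 < Real.sin x := Real.sin_pos_of_pos_of_lt_pi hx0 hxπ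
  have key : τ * Real.cos x < 2 * Real.sin x := by
    rcases lt_or_ge x (π / 2) with h | h
    · have hcos : 0 < Real.cos x := Real.cos_pos_of_mem_Ioo ⟨by linarith, h⟩
      have := Real.lt_tan hx0 h
      rw [Real.tan_eq_sin_div_cos] at this
      have : x * Real.cos x < Real.sin x := by
        rwa [lt_div_iff₀ hcos] at this
      have hτ : τ = 2 * x := by rw [hx]; ring
      rw [hτ]; nlinarith
    · have hcos : Real.cos x ≤ 0 := Real.cos_nonpos_of_pi_div_two_le_of_le h (by linarith)
      nlinarith
  have hc : Real.cos τ = 1 - 2 * Real.sin x ^ 2 := by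
    have : τ = 2 * x := by rw [hx]; ring
    rw [this, Real.cos_two_mul']
    nlinarith [Real.sin_sq_add_cos_sq x]
  have hs : Real.sin τ = 2 * Real.sin x * Real.cos x := by
    have : τ = 2 * x := by rw [hx]; ring
    rw [this, Real.sin_two_mul]
  rw [hc, hs]
  nlinarith
end

section
/- For all τ ∈ (0, 2π) and all θ ∈ [−π/2, π/2], the function f(θ, τ) = 2(cos τ − 1) + τ sin τ cos²θ satisfies f(θ, τ) < 0; moreover f(θ, 2π) = 0 for all θ. -/
open Real

lemma hasDerivAt_gaux (t : ℝ) :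
    HasDerivAt (fun τ : ℝ => 2 * (Real.cos τ - 1) + τ * Real.sin τ)
      (t * Real.cos t - Real.sin t) t := by
  have h1 : HasDerivAt (fun τ : ℝ => 2 * (Real.cos τ - 1)) (2 * (-Real.sin t)) t :=
    ((Real.hasDerivAt_cos t).sub_const 1).const_mul 2
  have h2 : HasDerivAt (fun τ : ℝ => τ * Real.sin τ) (1 * Real.sin t + t * Real.cos t) t :=
    (hasDerivAt_id t).mul (Real.hasDerivAt_sin t)
  rw [show t * Real.cos t - Real.sin t = 2 * (-Real.sin t) + (1 * Real.sin t + t * Real.cos t) by ring]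
  exact h1.add h2

lemma gaux_neg {t : ℝ} (h0 : 0 < t) (hπ : t < π) :
    2 * (Real.cos t - 1) + t * Real.sin t < 0 := by
  have anti : StrictAntiOn (fun τ : ℝ => 2 * (Real.cos τ - 1) + τ * Real.sin τ)
      (Set.Icc 0 π) := by
    apply strictAntiOn_of_deriv_neg (convex_Icc 0 π)
    · exact Continuous.continuousOn (by continuity)
    · intro x hx
      rw [interior_Icc] at hx
      rw [(hasDerivAt_gaux x).deriv]
      have hsin : 0 < Real.sin x := Real.sin_pos_of_pos_of_lt_pi hx.1 hx.2
      rcases le_or_gt (Real.cos x) 0 with hc | hc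
      · have : x * Real.cos x ≤ 0 := mul_nonpos_of_nonneg_of_nonpos hx.1.le hc
        linarith
      · have hx2 : x < π / 2 := by
          by_contra h
          push_neg at h
          exact absurd (Real.cos_nonpos_of_pi_div_two_le_of_le h (by linarith [Real.pi_pos, hx.2]))
            (not_le.2 hc)
        have := Real.lt_tan hx.1 hx2
        rw [Real.tan_eq_sin_div_cos, lt_div_iff₀ hc] at this
        linarith
  have h1 := anti (Set.left_mem_Icc.2 (by linarith)) ⟨h0.le, hπ.le⟩ h0
  simpa using h1

theorem stmt_1 :
    (∀ τ ∈ Set.Ioo (0 : ℝ) (2 * π), ∀ θ ∈ Set.Icc (-(π / 2)) (π / 2),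
      2 * (Real.cos τ - 1) + τ * Real.sin τ * (Real.cos θ) ^ 2 < 0) ∧
    (∀ θ : ℝ,
      2 * (Real.cos (2 * π) - 1) + (2 * π) * Real.sin (2 * π) * (Real.cos θ) ^ 2 = 0) := by
  constructor
  · rintro τ ⟨hτ0, hτ2⟩ θ _
    have hcos2 : (Real.cos θ) ^ 2 ≤ 1 := by
      have := Real.neg_one_le_cos θ
      have := Real.cos_le_one θ
      nlinarith
    have hcos2n : 0 ≤ (Real.cos θ) ^ 2 := sq_nonneg _
    rcases le_or_gt (Real.sin τ) 0 with hs | hs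
    · have hlt1 : Real.cos τ < 1 := by
        have hle := Real.cos_le_one τ
        rcases hle.lt_or_eq with h | h
        · exact h
        · exfalso
          have := (Real.cos_eq_one_iff_of_lt_of_lt (by linarith [Real.two_pi_pos]) hτ2).1 h
          linarith
      have : τ * Real.sin τ * (Real.cos θ) ^ 2 ≤ 0 :=
        mul_nonpos_of_nonpos_of_nonneg (mul_nonpos_of_nonneg_of_nonpos hτ0.le hs) hcos2n
      linarith
    · have hτπ : τ < π := by
        by_contra h
        push_neg at h
        have : 0 ≤ Real.sin (τ - π) :=
          Real.sin_nonneg_of_nonneg_of_le_pi (by linarith) (by linarith)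
        rw [Real.sin_sub_pi] at this
        linarith
      have hg := gaux_neg hτ0 hτπ
      have : τ * Real.sin τ * (Real.cos θ) ^ 2 ≤ τ * Real.sin τ * 1 := by
        apply mul_le_mul_of_nonneg_left hcos2 (by positivity)
      linarith
  · intro θ
    simp [Real.cos_two_pi, Real.sin_two_pi]
end

section
/- Let ε > 0, θ ∈ (0, π/2), φ ∈ ℝ/2πℤ, h₃ = sin θ/ε, and τ = h₃ t with t ∈ (0, 2πε/sin θ) (so τ ∈ (0, 2π)). Then the point (x, y, z) = Exp_ε(θ, φ, t) satisfies x² + y² > 0 and z > 0. -/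
open Real

/-- The exponential map of the Riemannian problem `P_ε` on the Heisenberg group. -/
noncomputable def ExpMap (ε θ φ t : ℝ) : ℝ × ℝ × ℝ :=
  let h₃ := Real.sin θ / ε
  let τ := h₃ * t
  ((Real.cos θ * Real.cos φ * Real.sin τ + Real.cos θ * Real.sin φ * (Real.cos τ - 1)) / h₃,
   (Real.cos θ * Real.sin φ * Real.sin τ - Real.cos θ * Real.cos φ * (Real.cos τ - 1)) / h₃,
   (1 - ε ^ 2 * h₃ ^ 2) * (τ - Real.sin τ) / (2 * h₃ ^ 2) + ε ^ 2 * τ)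

theorem stmt_7 (ε θ φ t : ℝ) (hε : 0 < ε) (hθ : θ ∈ Set.Ioo 0 (π / 2))
    (ht : t ∈ Set.Ioo 0 (2 * π * ε / Real.sin θ)) :
    (ExpMap ε θ φ t).1 ^ 2 + (ExpMap ε θ φ t).2.1 ^ 2 > 0 ∧
      (ExpMap ε θ φ t).2.2 > 0 := by
  obtain ⟨hθ0, hθπ⟩ := hθ
  obtain ⟨ht0, ht2⟩ := ht
  have hπ := Real.pi_pos
  have hsθ : 0 < Real.sin θ := Real.sin_pos_of_pos_of_lt_pi hθ0 (by linarith)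
  have hcθ : 0 < Real.cos θ := Real.cos_pos_of_mem_Ioo ⟨by linarith, hθπ⟩
  set h₃ := Real.sin θ / ε with hh₃
  have hh3 : 0 < h₃ := div_pos hsθ hε
  set τ := h₃ * t with hτdef
  have hτ0 : 0 < τ := mul_pos hh3 ht0
  have hτ2 : τ < 2 * π := by
    have h := mul_lt_mul_of_pos_left ht2 hh3
    calc τ = h₃ * t := rfl
      _ < h₃ * (2 * π * ε / Real.sin θ) := h
      _ = 2 * π := by rw [hh₃]; field_simp
  have hsin2 : 0 < Real.sin (τ / 2) :=
    Real.sin_pos_of_pos_of_lt_pi (by linarith) (by linarith)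
  have hcos : Real.cos τ < 1 := by
    rcases lt_or_eq_of_le (Real.cos_le_one τ) with h | h
    · exact h
    · exact absurd ((Real.cos_eq_one_iff_of_lt_of_lt (by linarith) hτ2).1 h) (by linarith)
  have hx : (ExpMap ε θ φ t).1 =
      (Real.cos θ * Real.cos φ * Real.sin τ + Real.cos θ * Real.sin φ * (Real.cos τ - 1)) / h₃ :=
    rfl
  have hy : (ExpMap ε θ φ t).2.1 =
      (Real.cos θ * Real.sin φ * Real.sin τ - Real.cos θ * Real.cos φ * (Real.cos τ - 1)) / h₃ :=
    rfl
  have hz : (ExpMap ε θ φ t).2.2 =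
      (1 - ε ^ 2 * h₃ ^ 2) * (τ - Real.sin τ) / (2 * h₃ ^ 2) + ε ^ 2 * τ := rfl
  have hN : (Real.cos θ * Real.cos φ * Real.sin τ + Real.cos θ * Real.sin φ * (Real.cos τ - 1)) ^ 2
      + (Real.cos θ * Real.sin φ * Real.sin τ - Real.cos θ * Real.cos φ * (Real.cos τ - 1)) ^ 2
      = Real.cos θ ^ 2 * (2 - 2 * Real.cos τ) := by
    linear_combination (Real.cos θ ^ 2 * (Real.sin τ ^ 2 + (Real.cos τ - 1) ^ 2)) *
        Real.sin_sq_add_cos_sq φ + Real.cos θ ^ 2 * Real.sin_sq_add_cos_sq τ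
  constructor
  · have hsum : (ExpMap ε θ φ t).1 ^ 2 + (ExpMap ε θ φ t).2.1 ^ 2
        = ((Real.cos θ * Real.cos φ * Real.sin τ + Real.cos θ * Real.sin φ * (Real.cos τ - 1)) ^ 2
          + (Real.cos θ * Real.sin φ * Real.sin τ
            - Real.cos θ * Real.cos φ * (Real.cos τ - 1)) ^ 2) / h₃ ^ 2 := by
      rw [hx, hy]; field_simp
    rw [hsum, hN]
    apply div_pos
    · have h2 : (0:ℝ) < 2 - 2 * Real.cos τ := by linarith
      positivity
    · positivity
  · rw [hz]
    have he : ε ^ 2 * h₃ ^ 2 = Real.sin θ ^ 2 := by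
      rw [hh₃]; field_simp
    have hsle : Real.sin τ < τ := Real.sin_lt hτ0
    apply add_pos_of_nonneg_of_pos
    · apply div_nonneg
      · apply mul_nonneg
        · rw [he]
          nlinarith [Real.sin_sq_add_cos_sq θ, sq_nonneg (Real.cos θ)]
        · linarith
      · positivity
    · positivity
end

section
/- The sub-Riemannian sphere S₀(r) = {Exp₀(c, ψ, r) : |c| ≤ 2π/r, ψ ∈ ℝ/2πℤ} is contained in the Kuratowski lower limit of the Riemannian spheres S_ε(r) as ε → 0⁺; i.e., for every q ∈ S₀(r), dist(q, S_ε(r)) → 0 as ε → 0⁺. -/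
open Real Filter

/-- The exponential map of the sub-Riemannian problem `P₀` on the Heisenberg group. -/
noncomputable def ExpMap0 (c ψ t : ℝ) : ℝ × ℝ × ℝ :=
  if c = 0 then (t * Real.cos ψ, t * Real.sin ψ, 0)
  else ((Real.sin (ψ + c * t) - Real.sin ψ) / c,
        (Real.cos ψ - Real.cos (ψ + c * t)) / c,
        (c * t - Real.sin (c * t)) / (2 * c ^ 2))

/-- The Riemannian sphere of radius `r` in the problem `P_ε`. -/
noncomputable def sphereε (ε r : ℝ) : Set (ℝ × ℝ × ℝ) :=
  {q | ∃ θ φ : ℝ, r * |Real.sin θ| ≤ 2 * π * ε ∧ q = ExpMap ε θ φ r}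

/-- The sub-Riemannian sphere of radius `r` in the problem `P₀`. -/
noncomputable def sphere0 (r : ℝ) : Set (ℝ × ℝ × ℝ) :=
  {q | ∃ c ψ : ℝ, r * |c| ≤ 2 * π ∧ q = ExpMap0 c ψ r}

lemma expMap_formula (ε c ψ r : ℝ) (hε : ε ≠ 0) (h1 : |ε * c| ≤ 1) :
    ExpMap ε (Real.arcsin (ε * c)) ψ r =
      ((Real.sqrt (1 - (ε * c) ^ 2) * Real.cos ψ * Real.sin (c * r)
          + Real.sqrt (1 - (ε * c) ^ 2) * Real.sin ψ * (Real.cos (c * r) - 1)) / c,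
       (Real.sqrt (1 - (ε * c) ^ 2) * Real.sin ψ * Real.sin (c * r)
          - Real.sqrt (1 - (ε * c) ^ 2) * Real.cos ψ * (Real.cos (c * r) - 1)) / c,
       (1 - ε ^ 2 * c ^ 2) * (c * r - Real.sin (c * r)) / (2 * c ^ 2) + ε ^ 2 * (c * r)) := by
  obtain ⟨hl, hu⟩ := abs_le.mp h1
  have hs : Real.sin (Real.arcsin (ε * c)) = ε * c := Real.sin_arcsin hl hu
  have hcos : Real.cos (Real.arcsin (ε * c)) = Real.sqrt (1 - (ε * c) ^ 2) :=
    Real.cos_arcsin _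
  have h3 : ε * c / ε = c := by field_simp
  simp only [ExpMap, hs, hcos, h3]

lemma mem_sphereε_arcsin (ε c ψ r : ℝ) (hε : 0 < ε) (h1 : |ε * c| ≤ 1)
    (hc : r * |c| ≤ 2 * π) :
    ExpMap ε (Real.arcsin (ε * c)) ψ r ∈ sphereε ε r := by
  refine ⟨Real.arcsin (ε * c), ψ, ?_, rfl⟩
  obtain ⟨hl, hu⟩ := abs_le.mp h1
  rw [Real.sin_arcsin hl hu, abs_mul, abs_of_pos hε]
  calc r * (ε * |c|) = (r * |c|) * ε := by ring
    _ ≤ (2 * π) * ε := by nlinarith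
    _ = 2 * π * ε := by ring

lemma tendsto_sin_slope (ψ r : ℝ) :
    Tendsto (fun ε : ℝ => (Real.sin (ψ + ε * r) - Real.sin ψ) / ε)
      (nhdsWithin 0 (Set.Ioi 0)) (nhds (r * Real.cos ψ)) := by
  have hg : HasDerivAt (fun ε : ℝ => ψ + ε * r) r 0 := by
    simpa using ((hasDerivAt_id (0:ℝ)).mul_const r).const_add ψ
  have h : HasDerivAt (fun ε : ℝ => Real.sin (ψ + ε * r)) (Real.cos (ψ + 0 * r) * r) 0 :=
    (Real.hasDerivAt_sin _).comp 0 hg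
  simp only [zero_mul, add_zero] at h
  have := hasDerivAt_iff_tendsto_slope.mp h
  have h2 := this.mono_left (nhdsWithin_mono 0 (fun x hx => ne_of_gt hx))
  rw [show Real.cos ψ * r = r * Real.cos ψ by ring] at h2
  refine h2.congr fun x => ?_
  simp [slope_def_field]

lemma tendsto_cos_slope (ψ r : ℝ) :
    Tendsto (fun ε : ℝ => (Real.cos ψ - Real.cos (ψ + ε * r)) / ε)
      (nhdsWithin 0 (Set.Ioi 0)) (nhds (r * Real.sin ψ)) := by
  have hg : HasDerivAt (fun ε : ℝ => ψ + ε * r) r 0 := by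
    simpa using ((hasDerivAt_id (0:ℝ)).mul_const r).const_add ψ
  have h : HasDerivAt (fun ε : ℝ => Real.cos (ψ + ε * r)) (-Real.sin (ψ + 0 * r) * r) 0 :=
    (Real.hasDerivAt_cos _).comp 0 hg
  simp only [zero_mul, add_zero] at h
  have := hasDerivAt_iff_tendsto_slope.mp h
  have h2 := (this.mono_left (nhdsWithin_mono 0 (fun x hx => ne_of_gt hx))).neg
  rw [show -(-Real.sin ψ * r) = r * Real.sin ψ by ring] at h2
  refine h2.congr fun x => ?_
  simp [slope_def_field]
  ring

lemma tendsto_cube (r : ℝ) (hr : 0 < r) :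
    Tendsto (fun ε : ℝ => (ε * r - Real.sin (ε * r)) / (2 * ε ^ 2))
      (nhdsWithin 0 (Set.Ioi 0)) (nhds 0) := by
  have hev : ∀ᶠ ε : ℝ in nhdsWithin 0 (Set.Ioi 0), ε ∈ Set.Ioo 0 (1 / r) :=
    Ioo_mem_nhdsGT_of_mem ⟨le_refl _, by positivity⟩
  have hge : Tendsto (fun ε : ℝ => ε * (r ^ 3 / 8)) (nhdsWithin 0 (Set.Ioi 0)) (nhds 0) := by
    have hc : Continuous (fun ε : ℝ => ε * (r ^ 3 / 8)) := continuous_id.mul continuous_const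
    simpa using (hc.tendsto 0).mono_left (nhdsWithin_le_nhds : nhdsWithin (0:ℝ) (Set.Ioi 0) ≤ nhds 0)
  refine squeeze_zero' ?_ ?_ hge
  · filter_upwards [hev] with ε hε
    have hx : 0 < ε * r := mul_pos hε.1 hr
    have h1 := (Real.sin_lt hx).le
    have h3 : (0:ℝ) ≤ 2 * ε ^ 2 := by positivity
    exact div_nonneg (by linarith) h3
  · filter_upwards [hev] with ε hε
    have hx : 0 < ε * r := mul_pos hε.1 hr
    have hx1 : ε * r ≤ 1 := by
      have := hε.2
      calc ε * r ≤ (1 / r) * r := by nlinarith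
        _ = 1 := by field_simp
    have hb := Real.sin_gt_sub_cube hx
    have h2 : ε * r - Real.sin (ε * r) ≤ (ε * r) ^ 3 / 4 := by linarith [pow_pos hx 3]
    have h3 : (0:ℝ) < 2 * ε ^ 2 := by
      have := hε.1
      positivity
    rw [div_le_iff₀ h3]
    nlinarith [hε.1.le, Real.sin_lt hx]

/-- Kuratowski lower semicontinuity of the family of spheres `S_ε(r)` at `ε = 0`. -/
theorem stmt_16 (r : ℝ) (hr : 0 < r) :
    ∀ q ∈ sphere0 r,
      Tendsto (fun ε : ℝ => Metric.infDist q (sphereε ε r))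
        (nhdsWithin 0 (Set.Ioi 0)) (nhds 0) := by
  rintro q ⟨c, ψ, hc, rfl⟩
  by_cases hc0 : c = 0
  · -- c = 0 : use θ = arcsin (ε * ε)
    subst hc0
    have hq0 : ExpMap0 0 ψ r = (r * Real.cos ψ, r * Real.sin ψ, 0) := by
      simp [ExpMap0, mul_comm]
    have hδ : (0:ℝ) < min 1 (2 * π / r) := lt_min one_pos (by positivity)
    have hev : ∀ᶠ ε : ℝ in nhdsWithin 0 (Set.Ioi 0), ε ∈ Set.Ioo 0 (min 1 (2 * π / r)) :=
      Ioo_mem_nhdsGT_of_mem ⟨le_refl _, hδ⟩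
    have habs : ∀ ε : ℝ, ε ∈ Set.Ioo 0 (min 1 (2 * π / r)) → |ε * ε| ≤ 1 := by
      intro ε hε
      have h1 : ε < 1 := lt_of_lt_of_le hε.2 (min_le_left _ _)
      rw [abs_of_pos (mul_pos hε.1 hε.1)]
      nlinarith [hε.1]
    have hcon : ∀ ε : ℝ, ε ∈ Set.Ioo 0 (min 1 (2 * π / r)) → r * |ε| ≤ 2 * π := by
      intro ε hε
      have h1 : ε < 2 * π / r := lt_of_lt_of_le hε.2 (min_le_right _ _)
      rw [abs_of_pos hε.1]
      calc r * ε ≤ r * (2 * π / r) := by nlinarith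
        _ = 2 * π := by field_simp
    -- the limit of the approximating points
    have hsqrt : Tendsto (fun ε : ℝ => Real.sqrt (1 - (ε * ε) ^ 2))
        (nhdsWithin 0 (Set.Ioi 0)) (nhds 1) := by
      have hc2 : Continuous (fun ε : ℝ => Real.sqrt (1 - (ε * ε) ^ 2)) :=
        Real.continuous_sqrt.comp (by fun_prop)
      have := (hc2.tendsto 0).mono_left (nhdsWithin_le_nhds : nhdsWithin (0:ℝ) (Set.Ioi 0) ≤ nhds 0)
      simpa using this
    have comp1 : Tendsto (fun ε : ℝ =>
        Real.sqrt (1 - (ε * ε) ^ 2) * ((Real.sin (ψ + ε * r) - Real.sin ψ) / ε))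
        (nhdsWithin 0 (Set.Ioi 0)) (nhds (r * Real.cos ψ)) := by
      have := hsqrt.mul (tendsto_sin_slope ψ r)
      simpa using this
    have comp2 : Tendsto (fun ε : ℝ =>
        Real.sqrt (1 - (ε * ε) ^ 2) * ((Real.cos ψ - Real.cos (ψ + ε * r)) / ε))
        (nhdsWithin 0 (Set.Ioi 0)) (nhds (r * Real.sin ψ)) := by
      have := hsqrt.mul (tendsto_cos_slope ψ r)
      simpa using this
    have hA : Tendsto (fun ε : ℝ => 1 - ε ^ 2 * ε ^ 2) (nhdsWithin 0 (Set.Ioi 0)) (nhds 1) := by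
      have hc2 : Continuous (fun ε : ℝ => 1 - ε ^ 2 * ε ^ 2) := by fun_prop
      have := (hc2.tendsto 0).mono_left (nhdsWithin_le_nhds : nhdsWithin (0:ℝ) (Set.Ioi 0) ≤ nhds 0)
      simpa using this
    have hB : Tendsto (fun ε : ℝ => ε ^ 2 * (ε * r)) (nhdsWithin 0 (Set.Ioi 0)) (nhds 0) := by
      have hc2 : Continuous (fun ε : ℝ => ε ^ 2 * (ε * r)) := by fun_prop
      have := (hc2.tendsto 0).mono_left (nhdsWithin_le_nhds : nhdsWithin (0:ℝ) (Set.Ioi 0) ≤ nhds 0)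
      simpa using this
    have comp3 : Tendsto (fun ε : ℝ =>
        (1 - ε ^ 2 * ε ^ 2) * ((ε * r - Real.sin (ε * r)) / (2 * ε ^ 2)) + ε ^ 2 * (ε * r))
        (nhdsWithin 0 (Set.Ioi 0)) (nhds 0) := by
      have := (hA.mul (tendsto_cube r hr)).add hB
      simpa using this
    have hF : Tendsto (fun ε : ℝ =>
        ((Real.sqrt (1 - (ε * ε) ^ 2) * ((Real.sin (ψ + ε * r) - Real.sin ψ) / ε),
          Real.sqrt (1 - (ε * ε) ^ 2) * ((Real.cos ψ - Real.cos (ψ + ε * r)) / ε),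
          (1 - ε ^ 2 * ε ^ 2) * ((ε * r - Real.sin (ε * r)) / (2 * ε ^ 2)) + ε ^ 2 * (ε * r)) :
          ℝ × ℝ × ℝ))
        (nhdsWithin 0 (Set.Ioi 0)) (nhds (ExpMap0 0 ψ r)) := by
      rw [hq0]
      exact comp1.prodMk_nhds (comp2.prodMk_nhds comp3)
    have hP : Tendsto (fun ε : ℝ => ExpMap ε (Real.arcsin (ε * ε)) ψ r)
        (nhdsWithin 0 (Set.Ioi 0)) (nhds (ExpMap0 0 ψ r)) := by
      refine hF.congr' ?_
      filter_upwards [hev] with ε hε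
      rw [expMap_formula ε ε ψ r hε.1.ne' (habs ε hε)]
      simp only [Prod.mk.injEq]
      refine ⟨?_, ?_, ?_⟩
      · rw [Real.sin_add]; ring
      · rw [Real.cos_add]; ring
      · ring
    have hdist : Tendsto (fun ε : ℝ => dist (ExpMap0 0 ψ r) (ExpMap ε (Real.arcsin (ε * ε)) ψ r))
        (nhdsWithin 0 (Set.Ioi 0)) (nhds 0) := by
      have hconst : Tendsto (fun _ : ℝ => ExpMap0 0 ψ r) (nhdsWithin 0 (Set.Ioi 0))
          (nhds (ExpMap0 0 ψ r)) := tendsto_const_nhds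
      simpa using hconst.dist hP
    refine squeeze_zero' (Eventually.of_forall fun _ => Metric.infDist_nonneg) ?_ hdist
    filter_upwards [hev] with ε hε
    exact Metric.infDist_le_dist_of_mem
      (mem_sphereε_arcsin ε ε ψ r hε.1 (habs ε hε) (hcon ε hε))
  · -- c ≠ 0 : use θ = arcsin (ε * c)
    have hcabs : 0 < |c| := abs_pos.mpr hc0
    have hev : ∀ᶠ ε : ℝ in nhdsWithin 0 (Set.Ioi 0), ε ∈ Set.Ioo 0 (1 / |c|) :=
      Ioo_mem_nhdsGT_of_mem ⟨le_refl _, by positivity⟩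
    have habs : ∀ ε : ℝ, ε ∈ Set.Ioo 0 (1 / |c|) → |ε * c| ≤ 1 := by
      intro ε hε
      rw [abs_mul, abs_of_pos hε.1]
      have h1 := hε.2
      calc ε * |c| ≤ (1 / |c|) * |c| := by nlinarith
        _ = 1 := by field_simp
    have hFcont : Continuous (fun ε : ℝ =>
        (((Real.sqrt (1 - (ε * c) ^ 2) * Real.cos ψ * Real.sin (c * r)
            + Real.sqrt (1 - (ε * c) ^ 2) * Real.sin ψ * (Real.cos (c * r) - 1)) / c,
          (Real.sqrt (1 - (ε * c) ^ 2) * Real.sin ψ * Real.sin (c * r)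
            - Real.sqrt (1 - (ε * c) ^ 2) * Real.cos ψ * (Real.cos (c * r) - 1)) / c,
          (1 - ε ^ 2 * c ^ 2) * (c * r - Real.sin (c * r)) / (2 * c ^ 2) + ε ^ 2 * (c * r)) :
          ℝ × ℝ × ℝ)) := by
      have hs : Continuous (fun ε : ℝ => Real.sqrt (1 - (ε * c) ^ 2)) :=
        Real.continuous_sqrt.comp (by fun_prop)
      fun_prop
    have hF0 : (((Real.sqrt (1 - ((0:ℝ) * c) ^ 2) * Real.cos ψ * Real.sin (c * r)
            + Real.sqrt (1 - ((0:ℝ) * c) ^ 2) * Real.sin ψ * (Real.cos (c * r) - 1)) / c,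
          (Real.sqrt (1 - ((0:ℝ) * c) ^ 2) * Real.sin ψ * Real.sin (c * r)
            - Real.sqrt (1 - ((0:ℝ) * c) ^ 2) * Real.cos ψ * (Real.cos (c * r) - 1)) / c,
          (1 - (0:ℝ) ^ 2 * c ^ 2) * (c * r - Real.sin (c * r)) / (2 * c ^ 2)
            + (0:ℝ) ^ 2 * (c * r)) : ℝ × ℝ × ℝ) = ExpMap0 c ψ r := by
      have h1 : Real.sqrt (1 - ((0:ℝ) * c) ^ 2) = 1 := by norm_num
      rw [h1]
      simp only [ExpMap0, if_neg hc0, Prod.mk.injEq]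
      refine ⟨?_, ?_, ?_⟩
      · rw [Real.sin_add]; ring
      · rw [Real.cos_add]; ring
      · ring
    have hP : Tendsto (fun ε : ℝ => ExpMap ε (Real.arcsin (ε * c)) ψ r)
        (nhdsWithin 0 (Set.Ioi 0)) (nhds (ExpMap0 c ψ r)) := by
      have hF := (hFcont.tendsto 0).mono_left
        (nhdsWithin_le_nhds : nhdsWithin (0:ℝ) (Set.Ioi 0) ≤ nhds 0)
      rw [hF0] at hF
      refine hF.congr' ?_
      filter_upwards [hev] with ε hε
      rw [expMap_formula ε c ψ r hε.1.ne' (habs ε hε)]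
    have hdist : Tendsto (fun ε : ℝ => dist (ExpMap0 c ψ r) (ExpMap ε (Real.arcsin (ε * c)) ψ r))
        (nhdsWithin 0 (Set.Ioi 0)) (nhds 0) := by
      have hconst : Tendsto (fun _ : ℝ => ExpMap0 c ψ r) (nhdsWithin 0 (Set.Ioi 0))
          (nhds (ExpMap0 c ψ r)) := tendsto_const_nhds
      simpa using hconst.dist hP
    refine squeeze_zero' (Eventually.of_forall fun _ => Metric.infDist_nonneg) ?_ hdist
    filter_upwards [hev] with ε hε
    exact Metric.infDist_le_dist_of_mem
      (mem_sphereε_arcsin ε c ψ r hε.1 (habs ε hε) hc)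
end
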